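/- Weak duality for polyhedral distance: for polyhedra V = {x : C x ≤ d} and O = {x : A x ≤ b} in ℝ², and any λ ≥ 0, μ ≥ 0 with Cᵀ λ + Aᵀ μ = 0 and Aᵀ μ ≠ 0, the quantity (−λᵀ d − μᵀ b)/‖Aᵀ μ‖ is a lower bound on the signed distance sd(V, O). -/

import Mathlib

/-!
A dual certificate `(λ, μ)` turns the two systems of inequalities into a single one: if `x ∈ V`
and `y ∈ O`, then `λᵀ C x ≤ λᵀ d` and `μᵀ A y ≤ μᵀ b`, and adding them with `Cᵀ λ = -Aᵀ μ` gives
`⟪g, y - x⟫ ≤ β` for `g = Aᵀ μ` and `β = λᵀ d + μᵀ b`. So every translation bringing `V` into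
contact with `O`, i.e. every point of `O - V`, lies in the half-plane `⟪g, z⟫ ≤ β`. By
Cauchy–Schwarz such points have norm at least `D = -β / ‖g‖`, so the distance term is at least
`max D 0`; the translations `t • g / ‖g‖` with `t > max (-D) 0` leave the half-plane, so the
penetration term is at most `max (-D) 0`. The difference of the two bounds is `D`.
-/

open Matrix

def toE (v : Fin 2 → ℝ) : EuclideanSpace ℝ (Fin 2) := WithLp.toLp 2 v

noncomputable def distSet (V O : Set (EuclideanSpace ℝ (Fin 2))) : ℝ :=
  sInf {r : ℝ | ∃ z : EuclideanSpace ℝ (Fin 2), r = ‖z‖ ∧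
    (((fun v => v + z) '' V) ∩ O).Nonempty}

noncomputable def penSet (V O : Set (EuclideanSpace ℝ (Fin 2))) : ℝ :=
  sInf {r : ℝ | ∃ z : EuclideanSpace ℝ (Fin 2), r = ‖z‖ ∧
    ¬(((fun v => v + z) '' V) ∩ O).Nonempty}

noncomputable def sd (V O : Set (EuclideanSpace ℝ (Fin 2))) : ℝ :=
  distSet V O - penSet V O

open RealInnerProductSpace Set
open scoped Pointwise

section Certificate

variable {R l m n : Type*} [CommRing R] [PartialOrder R] [IsOrderedRing R]
  [Fintype l] [Fintype m] [Fintype n]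

theorem transpose_mulVec_dotProduct_le (C : Matrix m n R) {d : m → R} {x : n → R} {w : m → R}
    (hw : 0 ≤ w) (hx : C *ᵥ x ≤ d) : (Cᵀ *ᵥ w) ⬝ᵥ x ≤ w ⬝ᵥ d := by
  rw [mulVec_transpose, ← dotProduct_mulVec]
  exact dotProduct_le_dotProduct_of_nonneg_left hx hw

theorem dotProduct_sub_le_of_dual_certificate (C : Matrix l n R) (A : Matrix m n R)
    {d : l → R} {b : m → R} {lam : l → R} {mu : m → R} {x y : n → R}
    (hlam : 0 ≤ lam) (hmu : 0 ≤ mu) (hcons : Cᵀ *ᵥ lam + Aᵀ *ᵥ mu = 0)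
    (hx : C *ᵥ x ≤ d) (hy : A *ᵥ y ≤ b) :
    (Aᵀ *ᵥ mu) ⬝ᵥ (y - x) ≤ lam ⬝ᵥ d + mu ⬝ᵥ b := by
  have hC := transpose_mulVec_dotProduct_le C hlam hx
  have hA := transpose_mulVec_dotProduct_le A hmu hy
  rw [eq_neg_of_add_eq_zero_left hcons, neg_dotProduct] at hC
  rw [dotProduct_sub, sub_eq_neg_add]
  exact add_le_add hC hA

end Certificate

theorem bddBelow_norm_image {E : Type*} [SeminormedAddGroup E] (S : Set E) :
    BddBelow (norm '' S) :=
  ⟨0, forall_mem_image.2 fun z _ => norm_nonneg z⟩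

section HalfSpace

variable {E : Type*} [NormedAddCommGroup E] [InnerProductSpace ℝ E] {g : E} {β : ℝ}

theorem neg_div_norm_le_norm_of_inner_le {z : E} (hg : g ≠ 0) (h : ⟪g, z⟫ ≤ β) :
    -β / ‖g‖ ≤ ‖z‖ := by
  rw [div_le_iff₀ (norm_pos_iff.2 hg)]
  nlinarith [neg_abs_le ⟪g, z⟫, abs_real_inner_le_norm g z]

theorem max_neg_div_norm_le_sInf_norm {S : Set E} (hne : S.Nonempty) (hg : g ≠ 0)
    (hS : ∀ z ∈ S, ⟪g, z⟫ ≤ β) : max (-β / ‖g‖) 0 ≤ sInf (norm '' S) :=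
  le_csInf (hne.image _) <| forall_mem_image.2 fun z hz =>
    max_le (neg_div_norm_le_norm_of_inner_le hg (hS z hz)) (norm_nonneg z)

theorem sInf_norm_compl_le {S : Set E} (hg : g ≠ 0) (hS : ∀ z ∈ S, ⟪g, z⟫ ≤ β) :
    sInf (norm '' Sᶜ) ≤ max (β / ‖g‖) 0 := by
  have hg₀ : 0 < ‖g‖ := norm_pos_iff.2 hg
  refine le_of_forall_gt_imp_ge_of_dense fun t ht => ?_
  have ht₀ : 0 < t := (le_max_right _ _).trans_lt ht
  have hβ : β < t * ‖g‖ := (div_lt_iff₀ hg₀).1 ((le_max_left _ _).trans_lt ht)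
  set z := (t / ‖g‖) • g
  have hz : ‖z‖ = t := by
    rw [norm_smul, Real.norm_of_nonneg (by positivity), div_mul_cancel₀ _ hg₀.ne']
  have hzS : z ∉ S := fun hzS => by
    have hinner : ⟪g, z⟫ = t * ‖g‖ := by
      rw [real_inner_smul_right, real_inner_self_eq_norm_sq]
      field_simp
    linarith [hS z hzS]
  calc sInf (norm '' Sᶜ) ≤ ‖z‖ := csInf_le (bddBelow_norm_image _) (mem_image_of_mem _ hzS)
    _ = t := hz

theorem neg_div_norm_le_sInf_norm_sub_sInf_norm_compl {S : Set E} (hne : S.Nonempty)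
    (hg : g ≠ 0) (hS : ∀ z ∈ S, ⟪g, z⟫ ≤ β) :
    -β / ‖g‖ ≤ sInf (norm '' S) - sInf (norm '' Sᶜ) := by
  have hdist := max_neg_div_norm_le_sInf_norm hne hg hS
  have hpen := sInf_norm_compl_le hg hS
  rw [← neg_neg (β / ‖g‖), ← neg_div] at hpen
  linarith [max_zero_sub_max_neg_zero_eq_self (-β / ‖g‖)]

end HalfSpace

theorem image_add_right_inter_nonempty_iff {E : Type*} [AddCommGroup E] {V O : Set E} {z : E} :
    ((fun v => v + z) '' V ∩ O).Nonempty ↔ z ∈ O - V := by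
  constructor
  · rintro ⟨_, ⟨v, hv, rfl⟩, hvz⟩
    exact ⟨v + z, hvz, v, hv, add_sub_cancel_left v z⟩
  · rintro ⟨o, ho, v, hv, rfl⟩
    exact ⟨o, ⟨v, hv, add_sub_cancel _ _⟩, ho⟩

theorem sd_eq_sInf_norm_sub (V O : Set (EuclideanSpace ℝ (Fin 2))) :
    sd V O = sInf (norm '' (O - V)) - sInf (norm '' (O - V)ᶜ) := by
  simp only [sd, distSet, penSet, image_add_right_inter_nonempty_iff]
  congr 2 <;> ext r <;> simp only [mem_image, mem_compl_iff, mem_ofPred_eq, eq_comm, and_comm]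

theorem weak_duality_polyhedral_sd_general {L Lm : ℕ}
    (C : Matrix (Fin L) (Fin 2) ℝ) (d : Fin L → ℝ)
    (A : Matrix (Fin Lm) (Fin 2) ℝ) (b : Fin Lm → ℝ)
    (V O : Set (EuclideanSpace ℝ (Fin 2)))
    (hV : V = {x : EuclideanSpace ℝ (Fin 2) | ∀ i, C.mulVec x i ≤ d i})
    (hO : O = {x : EuclideanSpace ℝ (Fin 2) | ∀ i, A.mulVec x i ≤ b i})
    (hVne : V.Nonempty) (hOne : O.Nonempty)
    (lam : Fin L → ℝ) (mu : Fin Lm → ℝ)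
    (hlam : 0 ≤ lam) (hmu : 0 ≤ mu)
    (hcons : Cᵀ.mulVec lam + Aᵀ.mulVec mu = 0)
    (hAmu : Aᵀ.mulVec mu ≠ 0) :
    (-(lam ⬝ᵥ d) - mu ⬝ᵥ b) / ‖toE (Aᵀ.mulVec mu)‖ ≤ sd V O := by
  have hg : toE (Aᵀ *ᵥ mu) ≠ 0 := fun h => hAmu (congrArg WithLp.ofLp h)
  have hS : ∀ z ∈ O - V, ⟪toE (Aᵀ *ᵥ mu), z⟫ ≤ lam ⬝ᵥ d + mu ⬝ᵥ b := by
    rintro _ ⟨y, hy, x, hx, rfl⟩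
    rw [hO] at hy
    rw [hV] at hx
    rw [EuclideanSpace.inner_eq_star_dotProduct, star_trivial, dotProduct_comm]
    exact dotProduct_sub_le_of_dual_certificate C A hlam hmu hcons hx hy
  rw [sd_eq_sInf_norm_sub, ← neg_add']
  exact neg_div_norm_le_sInf_norm_sub_sInf_norm_compl (hOne.sub hVne) hg hS

/-- weak duality: for polyhedra `V = {x : C x ≤ d}` and `O = {x : A x ≤ b}`
and any `λ ≥ 0`, `μ ≥ 0` with `Cᵀλ + Aᵀμ = 0` and `Aᵀμ ≠ 0`, the quantity
`(−λᵀd − μᵀb)/‖Aᵀμ‖` is a lower bound on the signed distance. -/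
theorem weak_duality_polyhedral_sd {L Lm : ℕ}
    (C : Matrix (Fin L) (Fin 2) ℝ) (d : Fin L → ℝ)
    (A : Matrix (Fin Lm) (Fin 2) ℝ) (b : Fin Lm → ℝ)
    (V O : Set (EuclideanSpace ℝ (Fin 2)))
    (hV : V = {x : EuclideanSpace ℝ (Fin 2) | ∀ i, C.mulVec x i ≤ d i})
    (hO : O = {x : EuclideanSpace ℝ (Fin 2) | ∀ i, A.mulVec x i ≤ b i})
    (hVne : V.Nonempty) (hOne : O.Nonempty)
    (hVc : IsCompact V) (hOc : IsCompact O)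
    (lam : Fin L → ℝ) (mu : Fin Lm → ℝ)
    (hlam : 0 ≤ lam) (hmu : 0 ≤ mu)
    (hcons : Cᵀ.mulVec lam + Aᵀ.mulVec mu = 0)
    (hAmu : Aᵀ.mulVec mu ≠ 0) :
    (-(lam ⬝ᵥ d) - mu ⬝ᵥ b) / ‖toE (Aᵀ.mulVec mu)‖ ≤ sd V O :=
  weak_duality_polyhedral_sd_general C d A b V O hV hO hVne hOne lam mu hlam hmu hcons hAmu
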